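/- For every integer constant c > 1 there exist a constant C > 0, an oracle A assigning to every feasible port-numbered graph a binary advice string, and a function f, such that for every feasible port-numbered graph G of diameter D and election index φ: the advice length |A(G)| is at most C·(1 + log(1 + log φ)), and the assignment v ↦ f(A(G), B^{D+c·φ}(v)) is a leader election output for G. That is, leader election in time at most D + c·φ can be achieved with O(log log φ) bits of advice. -/

import Mathlib

namespace Election

/-- A port-numbered graph: a simple undirected connected graph on `n ≥ 3` unlabeled nodes
(vertex set `Fin n`) in which, at each node `v` of degree `d`, the edges incident to `v`
carry distinct port numbers `0, …, d-1` at `v`. `portNum v u` is the port number at `v`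
of the edge `{v, u}` (meaningful only when `v` and `u` are adjacent). -/
structure PortGraph where
  n : ℕ
  three_le : 3 ≤ n
  G : SimpleGraph (Fin n)
  conn : G.Connected
  portNum : Fin n → Fin n → ℕ
  port_lt : ∀ v u : Fin n, G.Adj v u → portNum v u < Nat.card {w : Fin n // G.Adj v w}
  port_inj : ∀ v u w : Fin n, G.Adj v u → G.Adj v w → portNum v u = portNum v w → u = w

namespace PortGraph

/-- The degree of a node. -/
noncomputable def degree (PG : PortGraph) (v : Fin PG.n) : ℕ :=
  Nat.card {w : Fin PG.n // PG.G.Adj v w}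

open Classical in
/-- The neighbor of `v` reached through port `p` (junk value `v` if there is none). -/
noncomputable def nbr (PG : PortGraph) (v : Fin PG.n) (p : ℕ) : Fin PG.n :=
  if h : ∃ u : Fin PG.n, PG.G.Adj v u ∧ PG.portNum v u = p then h.choose else v

/-- Abstract (augmented truncated) views: a view at depth `0` is a leaf carrying a degree;
a view at depth `ℓ+1` is a node whose children are listed in the order of the port numbers
`0, …, d-1` at the root, each child carrying the port number at the other endpoint of the
corresponding edge together with the subview at depth `ℓ`. -/
inductive AugView : Type
  | leaf (deg : ℕ) : AugView
  | node (children : List (ℕ × AugView)) : AugView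

/-- The augmented truncated view `B^ℓ(v)` of node `v` at depth `ℓ`. -/
noncomputable def augView (PG : PortGraph) : ℕ → Fin PG.n → AugView
  | 0, v => AugView.leaf (PG.degree v)
  | (ℓ + 1), v => AugView.node ((List.range (PG.degree v)).map
      fun p => (PG.portNum (PG.nbr v p) v, PG.augView ℓ (PG.nbr v p)))

/-- `IsPath PG v s vs` means: the sequence `s = (p₁, q₁, …, p_k, q_k)` of port numbers codes
a path in `PG` starting at `v` whose i-th edge carries port `p_i` at the endpoint closer to
`v` and `q_i` at the other endpoint, and `vs` is the list of visited vertices (from `v` on). -/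
inductive IsPath (PG : PortGraph) : Fin PG.n → List ℕ → List (Fin PG.n) → Prop
  | nil (v : Fin PG.n) : IsPath PG v [] [v]
  | cons (v u : Fin PG.n) (p q : ℕ) (rest : List ℕ) (vs : List (Fin PG.n))
      (hadj : PG.G.Adj v u) (hp : PG.portNum v u = p) (hq : PG.portNum u v = q)
      (htail : IsPath PG u rest vs) : IsPath PG v (p :: q :: rest) (v :: vs)

/-- `P` is a leader election output for `PG`: every node `v` outputs a sequence of port
numbers coding a simple path starting at `v`, and all these paths end at a common node. -/
def IsLeaderElection (PG : PortGraph) (P : Fin PG.n → List ℕ) : Prop :=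
  ∃ leader : Fin PG.n, ∀ v : Fin PG.n, ∃ vs : List (Fin PG.n),
    PG.IsPath v (P v) vs ∧ vs.Nodup ∧ vs.getLast? = some leader

/-- A graph is feasible if at some depth all augmented truncated views are pairwise distinct. -/
def Feasible (PG : PortGraph) : Prop :=
  ∃ ℓ : ℕ, Function.Injective (PG.augView ℓ)

/-- The election index: the smallest depth at which all augmented truncated views are distinct. -/
noncomputable def electionIndex (PG : PortGraph) : ℕ :=
  sInf {ℓ : ℕ | Function.Injective (PG.augView ℓ)}

/-- The diameter: the maximum distance between two nodes. -/
noncomputable def diam (PG : PortGraph) : ℕ :=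
  sSup (Set.range fun p : Fin PG.n × Fin PG.n => PG.G.dist p.1 p.2)

end PortGraph

/-! The oracle writes the bit length `s` of `φ` in binary, which takes `O(log log φ)` bits;
every node decodes `k = 2 ^ s - 1`, so that `φ ≤ k ≤ 2φ ≤ cφ`. As `k ≥ φ`, the depth-`k`
views of the nodes are pairwise distinct, and the view of depth `D + k` of any node contains
the depth-`k` views of all nodes. Fixing a well-order on views, every node elects the node with the
least depth-`k` view and outputs a path to it, read off its own view, along which the depth-`k`
views are pairwise distinct, hence a simple path in the graph. -/

def ofBits (l : List Bool) : ℕ :=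
  Nat.ofDigits 2 (l.map fun b => cond b 1 0)

lemma ofBits_bits (n : ℕ) : ofBits n.bits = n := by
  rw [ofBits, ← Nat.digits_two_eq_bits, Nat.ofDigits_digits]

lemma le_two_pow_size_sub_one (m : ℕ) : m ≤ 2 ^ m.size - 1 := by
  have := Nat.lt_size_self m
  omega

lemma two_pow_size_sub_one_le (m : ℕ) : 2 ^ m.size - 1 ≤ 2 * m := by
  rcases Nat.eq_zero_or_pos m with rfl | hm
  · simp
  have hs := Nat.size_pos.mpr hm
  have hpow : 2 ^ (m.size - 1) ≤ m := Nat.lt_size.mp (by omega)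
  have : 2 ^ m.size = 2 * 2 ^ (m.size - 1) := by rw [← pow_succ']; congr 1; omega
  omega

lemma size_le_one_add_logb (m : ℕ) : (m.size : ℝ) ≤ 1 + Real.logb 2 m := by
  rcases Nat.eq_zero_or_pos m with rfl | hm
  · simp
  have hs := Nat.size_pos.mpr hm
  have hpow : 2 ^ (m.size - 1) ≤ m := Nat.lt_size.mp (by omega)
  have : ((m.size - 1 : ℕ) : ℝ) ≤ Real.logb 2 m := by
    rw [Real.le_logb_iff_rpow_le one_lt_two (by exact_mod_cast hm), Real.rpow_natCast]
    exact_mod_cast hpow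
  rw [Nat.cast_sub hs, Nat.cast_one] at this
  linarith

lemma size_size_le (m : ℕ) : (m.size.size : ℝ) ≤ 1 + Real.logb 2 (1 + Real.logb 2 m) := by
  have hlog : 0 ≤ Real.logb 2 (m : ℝ) := by
    rcases Nat.eq_zero_or_pos m with rfl | hm
    · simp
    · exact Real.logb_nonneg one_lt_two (by exact_mod_cast hm)
  calc (m.size.size : ℝ) ≤ 1 + Real.logb 2 m.size := size_le_one_add_logb _
    _ ≤ 1 + Real.logb 2 (1 + Real.logb 2 m) := by
      rcases Nat.eq_zero_or_pos m.size with h | h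
      · rw [h, Nat.cast_zero, Real.logb_zero]
        linarith [Real.logb_nonneg one_lt_two (by linarith : (1 : ℝ) ≤ 1 + Real.logb 2 m)]
      · gcongr
        · exact one_lt_two
        · exact size_le_one_add_logb m

namespace PortGraph

variable (PG : PortGraph)

lemma exists_adj (v : Fin PG.n) : ∃ u, PG.G.Adj v u :=
  haveI : Nontrivial (Fin PG.n) := Fin.nontrivial_iff_two_le.mpr (by linarith [PG.three_le])
  PG.conn.preconnected.exists_adj_of_nontrivial v

lemma degree_pos (v : Fin PG.n) : 0 < PG.degree v := by
  obtain ⟨u, hu⟩ := PG.exists_adj v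
  have : Nonempty {w : Fin PG.n // PG.G.Adj v w} := ⟨⟨u, hu⟩⟩
  exact Nat.card_pos

lemma exists_adj_portNum_eq {v : Fin PG.n} {p : ℕ} (hp : p < PG.degree v) :
    ∃ u, PG.G.Adj v u ∧ PG.portNum v u = p := by
  let port : {w : Fin PG.n // PG.G.Adj v w} → Fin (PG.degree v) :=
    fun u => ⟨PG.portNum v u, PG.port_lt v u u.2⟩
  have hinj : Function.Injective port := fun a b hab =>
    Subtype.ext (PG.port_inj v a b a.2 b.2 (congrArg Fin.val hab))
  obtain ⟨u, hu⟩ :=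
    ((Nat.bijective_iff_injective_and_card port).mpr ⟨hinj, by simp [degree]⟩).2 ⟨p, hp⟩
  exact ⟨u, u.2, congrArg Fin.val hu⟩

lemma nbr_spec {v : Fin PG.n} {p : ℕ} (hp : p < PG.degree v) :
    PG.G.Adj v (PG.nbr v p) ∧ PG.portNum v (PG.nbr v p) = p := by
  have h := PG.exists_adj_portNum_eq hp
  rw [nbr, dif_pos h]
  exact h.choose_spec

lemma nbr_portNum {v u : Fin PG.n} (h : PG.G.Adj v u) : PG.nbr v (PG.portNum v u) = u :=
  have hspec := PG.nbr_spec (PG.port_lt v u h)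
  PG.port_inj v _ u hspec.1 h hspec.2

lemma dist_le_diam (v u : Fin PG.n) : PG.G.dist v u ≤ PG.diam :=
  le_csSup (Set.finite_range _).bddAbove ⟨(v, u), rfl⟩

namespace AugView

def trunc : ℕ → AugView → AugView
  | _, leaf d => leaf d
  | 0, node ch => leaf ch.length
  | k + 1, node ch => node (ch.map fun c => (c.1, trunc k c.2))

/-- Depth along the leftmost branch, which is the depth for the balanced views `augView ℓ v`. -/
def depth : AugView → ℕ
  | leaf _ => 0
  | node [] => 0
  | node ((_, t) :: _) => t.depth + 1

/-- The subview reached by following the port pairs `p₁, q₁, …, p_k, q_k` from the root. -/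
def nav : AugView → List ℕ → Option AugView
  | t, [] => some t
  | node ch, p :: q :: rest =>
      match ch[p]? with
      | some c => if c.1 = q then c.2.nav rest else none
      | none => none
  | _, _ => none

/-- The depth-`k` truncations of the subviews met along the first `⌊|out|/2⌋` steps of `out`. -/
def walkViews (k : ℕ) (w : AugView) (out : List ℕ) : List (Option AugView) :=
  (List.range (out.length / 2 + 1)).map fun i => (w.nav (out.take (2 * i))).map (trunc k)

def localViews (k : ℕ) (w : AugView) : Set AugView :=
  {s | ∃ out t, out.length ≤ 2 * (w.depth - k) ∧ w.nav out = some t ∧ t.trunc k = s}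

/-- Once the depth-`k` views are pairwise distinct, the distinct truncations along the walk make
it a simple path, and the minimality of its endpoint singles out the same node for everyone. -/
def IsElectionPath (k : ℕ) (w : AugView) (out : List ℕ) : Prop :=
  out.length ≤ 2 * (w.depth - k) ∧ (w.walkViews k out).Nodup ∧
    ∃ t, w.nav out = some t ∧ ∀ s ∈ w.localViews k, ¬ WellOrderingRel s (t.trunc k)

open Classical in
noncomputable def electionOutput (k : ℕ) (w : AugView) : List ℕ :=
  if h : ∃ out, w.IsElectionPath k out then h.choose else []

lemma isElectionPath_electionOutput {k : ℕ} {w : AugView} (h : ∃ out, w.IsElectionPath k out) :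
    w.IsElectionPath k (electionOutput k w) := by
  rw [electionOutput, dif_pos h]
  exact h.choose_spec

end AugView

open AugView

lemma trunc_augView {k ℓ : ℕ} (v : Fin PG.n) (hk : k ≤ ℓ) :
    (PG.augView ℓ v).trunc k = PG.augView k v := by
  induction k generalizing ℓ v with
  | zero => cases ℓ <;> simp [augView, trunc]
  | succ k ih =>
    obtain ⟨ℓ, rfl⟩ : ∃ ℓ', ℓ = ℓ' + 1 := ⟨ℓ - 1, by omega⟩
    simp only [augView, trunc, List.map_map]
    congr 1
    refine List.map_congr_left fun p _ => ?_
    simp [ih _ (by omega : k ≤ ℓ)]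

lemma depth_augView (ℓ : ℕ) (v : Fin PG.n) : (PG.augView ℓ v).depth = ℓ := by
  induction ℓ generalizing v with
  | zero => rfl
  | succ ℓ ih =>
    obtain ⟨d, hd⟩ : ∃ d, PG.degree v = d + 1 :=
      ⟨PG.degree v - 1, by have := PG.degree_pos v; omega⟩
    simp only [augView, hd, List.range_succ_eq_map, List.map_cons, depth, ih]

lemma injective_augView_mono {k ℓ : ℕ} (h : Function.Injective (PG.augView k))
    (hk : k ≤ ℓ) :
    Function.Injective (PG.augView ℓ) := fun u u' he =>
  h (by rw [← PG.trunc_augView u hk, he, PG.trunc_augView u' hk])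

lemma injective_augView_electionIndex (h : PG.Feasible) :
    Function.Injective (PG.augView PG.electionIndex) :=
  Nat.sInf_mem h

lemma nav_augView_succ (ℓ : ℕ) (v : Fin PG.n) (p q : ℕ) (rest : List ℕ) :
    (PG.augView (ℓ + 1) v).nav (p :: q :: rest) =
      if p < PG.degree v ∧ PG.portNum (PG.nbr v p) v = q then
        (PG.augView ℓ (PG.nbr v p)).nav rest
      else none := by
  by_cases hp : p < PG.degree v <;> simp [augView, nav, hp]

namespace IsPath

variable {PG} {v : Fin PG.n} {out : List ℕ} {vs : List (Fin PG.n)}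

lemma length_add_two (h : PG.IsPath v out vs) : out.length + 2 = 2 * vs.length := by
  induction h with
  | nil => rfl
  | cons _ _ _ _ _ _ _ _ _ _ ih =>
    simp only [List.length_cons]
    omega

lemma nav_take_augView (h : PG.IsPath v out vs) {ℓ i : ℕ} (hℓ : vs.length ≤ ℓ + 1)
    (hi : i < vs.length) :
    (PG.augView ℓ v).nav (out.take (2 * i)) = some (PG.augView (ℓ - i) vs[i]) := by
  induction h generalizing ℓ i with
  | nil =>
    obtain rfl : i = 0 := by simpa using hi
    simp [nav]
  | cons v u p q rest vs hadj hp hq _ ih =>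
    cases i with
    | zero => simp [nav]
    | succ i =>
      simp only [List.length_cons] at hℓ hi
      obtain ⟨ℓ, rfl⟩ : ∃ ℓ', ℓ = ℓ' + 1 := ⟨ℓ - 1, by omega⟩
      subst hp hq
      rw [show 2 * (i + 1) = 2 * i + 1 + 1 by ring, List.take_succ_cons, List.take_succ_cons,
        nav_augView_succ, if_pos ⟨PG.port_lt v u hadj, by rw [PG.nbr_portNum hadj]⟩,
        PG.nbr_portNum hadj, ih (by omega) (by omega)]
      simp

lemma nav_augView (h : PG.IsPath v out vs) {ℓ : ℕ} (hℓ : vs.length ≤ ℓ + 1) {u : Fin PG.n}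
    (hu : vs.getLast? = some u) :
    (PG.augView ℓ v).nav out = some (PG.augView (ℓ + 1 - vs.length) u) := by
  have hlen := h.length_add_two
  have hi : vs.length - 1 < vs.length := by omega
  have hlast : vs[vs.length - 1] = u := by
    simpa [List.getLast?_eq_getElem?, List.getElem?_eq_getElem hi] using hu
  rw [← List.take_of_length_le (show out.length ≤ 2 * (vs.length - 1) by omega),
    h.nav_take_augView hℓ hi, hlast]
  congr 2
  omega

lemma walkViews_augView (h : PG.IsPath v out vs) {k ℓ : ℕ} (hℓ : vs.length + k ≤ ℓ + 1) :
    (PG.augView ℓ v).walkViews k out = vs.map fun u => some (PG.augView k u) := by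
  have hlen := h.length_add_two
  have hlen' : ((PG.augView ℓ v).walkViews k out).length = vs.length := by
    simp only [walkViews, List.length_map, List.length_range]
    omega
  refine List.ext_getElem (by simpa using hlen') fun i hi _ => ?_
  rw [hlen'] at hi
  simp [walkViews, h.nav_take_augView (show vs.length ≤ ℓ + 1 by omega) hi,
    PG.trunc_augView _ (show k ≤ ℓ - i by omega)]

end IsPath

lemma exists_isPath_of_nav_augView :
    ∀ {ℓ : ℕ} {v : Fin PG.n} {out : List ℕ} {t : AugView},
      (PG.augView ℓ v).nav out = some t →
      ∃ vs u, PG.IsPath v out vs ∧ vs.getLast? = some u ∧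
        t = PG.augView (ℓ - out.length / 2) u
  | _, v, [], _, h => ⟨[v], v, .nil v, rfl, by simpa [nav] using h.symm⟩
  | 0, _, _ :: xs, _, h => by cases xs <;> simp [augView, nav] at h
  | _ + 1, _, [_], _, h => by simp [nav] at h
  | _ + 1, v, _ :: _ :: _, _, h => by
    rw [nav_augView_succ] at h
    split_ifs at h with hpq
    obtain ⟨vs, u, hpath, hu, rfl⟩ := exists_isPath_of_nav_augView h
    obtain ⟨hadj, hport⟩ := PG.nbr_spec hpq.1
    have hlen := hpath.length_add_two
    refine ⟨v :: vs, u, .cons _ _ _ _ _ _ hadj hport hpq.2 hpath, ?_, ?_⟩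
    · simp [List.getLast?_cons, hu]
    · congr 1
      simp only [List.length_cons]
      omega

lemma exists_isPath_support {a b : Fin PG.n} (p : PG.G.Walk a b) :
    ∃ out, PG.IsPath a out p.support := by
  induction p with
  | nil => exact ⟨[], .nil _⟩
  | @cons x y _ hxy _ ih =>
    obtain ⟨out, h⟩ := ih
    exact ⟨_, .cons x y _ _ out _ hxy rfl rfl h⟩

lemma exists_isPath_nodup (v u : Fin PG.n) :
    ∃ out vs, PG.IsPath v out vs ∧ vs.Nodup ∧ vs.getLast? = some u ∧
      vs.length ≤ PG.diam + 1 := by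
  obtain ⟨p, hp, hlen⟩ := PG.conn.exists_path_of_dist v u
  obtain ⟨out, h⟩ := PG.exists_isPath_support p
  refine ⟨out, p.support, h, hp.support_nodup, ?_, ?_⟩
  · rw [List.getLast?_eq_some_getLast p.support_ne_nil, SimpleGraph.Walk.getLast_support]
  · rw [p.length_support, hlen]
    linarith [PG.dist_le_diam v u]

lemma localViews_augView {k ℓ : ℕ} (hℓ : PG.diam + k ≤ ℓ) (v : Fin PG.n) :
    (PG.augView ℓ v).localViews k = Set.range (PG.augView k) := by
  ext s
  simp only [localViews, depth_augView, Set.mem_range, Set.mem_ofPred_eq]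
  constructor
  · rintro ⟨out, t, hlen, hnav, rfl⟩
    obtain ⟨vs, u, -, -, rfl⟩ := PG.exists_isPath_of_nav_augView hnav
    exact ⟨u, (PG.trunc_augView u (by omega)).symm⟩
  · rintro ⟨u, rfl⟩
    obtain ⟨out, vs, h, -, hu, hlen⟩ := PG.exists_isPath_nodup v u
    have := h.length_add_two
    exact ⟨out, _, by omega, h.nav_augView (by omega) hu, PG.trunc_augView u (by omega)⟩

variable {PG} {k ℓ : ℕ} {v : Fin PG.n} {out : List ℕ}

lemma isElectionPath_of_isPath (hk : Function.Injective (PG.augView k))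
    (hℓ : PG.diam + k ≤ ℓ) {vs : List (Fin PG.n)} {u : Fin PG.n} (h : PG.IsPath v out vs)
    (hnd : vs.Nodup) (hu : vs.getLast? = some u) (hlen : vs.length ≤ PG.diam + 1)
    (hmin : ∀ x, ¬ WellOrderingRel (PG.augView k x) (PG.augView k u)) :
    (PG.augView ℓ v).IsElectionPath k out := by
  have := h.length_add_two
  refine ⟨by rw [depth_augView]; omega, ?_, _, h.nav_augView (by omega) hu, ?_⟩
  · rw [h.walkViews_augView (by omega)]
    exact hnd.map ((Option.some_injective _).comp hk)
  · rw [localViews_augView PG hℓ, PG.trunc_augView u (by omega)]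
    rintro _ ⟨x, rfl⟩
    exact hmin x

lemma exists_isPath_of_isElectionPath (hℓ : PG.diam + k ≤ ℓ)
    (h : (PG.augView ℓ v).IsElectionPath k out) :
    ∃ vs u, PG.IsPath v out vs ∧ vs.Nodup ∧ vs.getLast? = some u ∧
      ∀ x, ¬ WellOrderingRel (PG.augView k x) (PG.augView k u) := by
  obtain ⟨hlen, hnd, t, hnav, hmin⟩ := h
  rw [depth_augView] at hlen
  obtain ⟨vs, u, hpath, hu, rfl⟩ := PG.exists_isPath_of_nav_augView hnav
  have := hpath.length_add_two
  refine ⟨vs, u, hpath, ?_, hu, fun x => ?_⟩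
  · rw [hpath.walkViews_augView (by omega)] at hnd
    exact hnd.of_map _
  · have := hmin (PG.augView k x) (by rw [localViews_augView PG hℓ]; exact ⟨x, rfl⟩)
    rwa [PG.trunc_augView u (by omega)] at this

/-- The leader is the node with the least depth-`k` view, unique as these views are pairwise
distinct and `WellOrderingRel` is trichotomous. -/
theorem isLeaderElection_electionOutput (hk : Function.Injective (PG.augView k))
    (hℓ : PG.diam + k ≤ ℓ) :
    PG.IsLeaderElection fun v => electionOutput k (PG.augView ℓ v) := by
  have : Nonempty (Fin PG.n) := ⟨⟨0, by linarith [PG.three_le]⟩⟩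
  obtain ⟨_, ⟨ld, rfl⟩, hld⟩ := (IsWellFounded.wf (r := WellOrderingRel)).has_min
    (Set.range (PG.augView k)) (Set.range_nonempty _)
  have hmin (x : Fin PG.n) : ¬ WellOrderingRel (PG.augView k x) (PG.augView k ld) :=
    hld _ ⟨x, rfl⟩
  refine ⟨ld, fun v => ?_⟩
  obtain ⟨out₀, vs₀, h₀, hnd₀, hu₀, hlen₀⟩ := PG.exists_isPath_nodup v ld
  have hex : ∃ out, (PG.augView ℓ v).IsElectionPath k out :=
    ⟨out₀, isElectionPath_of_isPath hk hℓ h₀ hnd₀ hu₀ hlen₀ hmin⟩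
  obtain ⟨vs, u, h, hnd, hu, humin⟩ :=
    exists_isPath_of_isElectionPath hℓ (isElectionPath_electionOutput hex)
  obtain rfl : u = ld := hk (((trichotomous_of WellOrderingRel _ _).resolve_left
    (hmin u)).resolve_right (humin ld))
  exact ⟨vs, h, hnd, hu⟩

end PortGraph

/-- Leader election in time at most `D + c·φ` can be achieved with `O(log log φ)` bits of
advice. -/
theorem advice_upper_bound_time_D_add_c_mul_phi (c : ℕ) (hc : 1 < c) :
    ∃ (C : ℝ) (A : PortGraph → List Bool)
      (f : List Bool → PortGraph.AugView → List ℕ), 0 < C ∧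
      ∀ PG : PortGraph, PG.Feasible →
        (((A PG).length : ℝ) ≤
          C * (1 + Real.logb 2 (1 + Real.logb 2 (PG.electionIndex : ℝ)))) ∧
        PG.IsLeaderElection
          (fun v => f (A PG) (PG.augView (PG.diam + c * PG.electionIndex) v)) := by
  refine ⟨1, fun PG => PG.electionIndex.size.bits,
    fun adv => PortGraph.AugView.electionOutput (2 ^ ofBits adv - 1), one_pos,
    fun PG hPG => ⟨?_, ?_⟩⟩
  · rw [one_mul, Nat.size_eq_bits_len]
    exact size_size_le _
  · simp only [ofBits_bits]
    refine PortGraph.isLeaderElection_electionOutput (PG.injective_augView_mono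
      (PG.injective_augView_electionIndex hPG) (le_two_pow_size_sub_one _)) ?_
    have := two_pow_size_sub_one_le PG.electionIndex
    have := Nat.mul_le_mul_right PG.electionIndex hc
    omega

end Election
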